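/- arXiv:1711.06915 — 5 statements merged into one kernel-verified Lean document; each statement's English description precedes it below -/
import Mathlib

section
/- Let (Ω, F, P) be a probability space with a filtration (F_t)_{t∈ℕ}, and let Q_1(t), …, Q_N(t) be nonnegative real-valued stochastic processes adapted to (F_t) with E[Q_n(t)²] < ∞ for all n and t. Define the Lyapunov function L(t) = (1/2) Σ_{n=1}^N Q_n(t)² and the Lyapunov drift Δ(t) = E[L(t+1) − L(t) | F_t]. If there exist constants B ≥ 0 and ε ≥ 0 such that Δ(t) ≤ B − ε Σ_{n=1}^N Q_n(t) almost surely for every t ∈ ℕ, then every queue is mean rate stable, i.e., lim_{τ→∞} E[Q_n(τ)]/τ = 0 for each n. -/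
/-!
Taking expectations in the drift inequality and dropping the nonnegative term `ε ∑ Q n t` gives
`E[L (t + 1)] ≤ E[L t] + B`, so `E[L t]` grows at most linearly. By Jensen,
`E[Q n t] ^ 2 ≤ E[Q n t ^ 2] ≤ 2 E[L t] = O(t)`, hence `E[Q n t] = O(√t) = o(t)`.
-/

open MeasureTheory Filter Topology

section Expectation

variable {Ω : Type*} {m0 : MeasurableSpace Ω} {μ : Measure Ω} [IsProbabilityMeasure μ]

lemma integral_le_of_condExp_le {m : MeasurableSpace Ω} (hm : m ≤ m0) {f : Ω → ℝ} {B : ℝ}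
    (h : μ[f | m] ≤ᵐ[μ] fun _ => B) : ∫ ω, f ω ∂μ ≤ B := by
  rw [← integral_condExp hm]
  calc ∫ ω, μ[f | m] ω ∂μ ≤ ∫ _, B ∂μ := integral_mono_ae integrable_condExp (integrable_const B) h
    _ = B := by simp

lemma integral_le_add_mul_of_condExp_sub_le (ℱ : Filtration ℕ m0) {L : ℕ → Ω → ℝ}
    (hL : ∀ t, Integrable (L t) μ) {B : ℝ} (h : ∀ t, μ[L (t + 1) - L t | ℱ t] ≤ᵐ[μ] fun _ => B)
    (t : ℕ) : ∫ ω, L t ω ∂μ ≤ ∫ ω, L 0 ω ∂μ + B * t := by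
  have hstep (s : ℕ) : ∫ ω, L (s + 1) ω ∂μ ≤ ∫ ω, L s ω ∂μ + B := by
    have := integral_le_of_condExp_le (ℱ.le s) (h s)
    rw [integral_sub' (hL _) (hL _)] at this
    linarith
  have hanti : Antitone fun s : ℕ => ∫ ω, L s ω ∂μ - B * s :=
    antitone_nat_of_succ_le fun s => by push_cast; linarith [hstep s]
  simpa [sub_le_iff_le_add'] using hanti (Nat.zero_le t)

lemma sq_integral_le_integral_sq {f : Ω → ℝ} (hf : MemLp f 2 μ) :
    (∫ ω, f ω ∂μ) ^ 2 ≤ ∫ ω, f ω ^ 2 ∂μ := by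
  have := ProbabilityTheory.variance_nonneg f μ
  rw [ProbabilityTheory.variance_eq_sub hf] at this
  simpa using this

end Expectation

lemma tendsto_div_natCast_of_sq_le_add_mul {x : ℕ → ℝ} {C D : ℝ}
    (h : ∀ τ : ℕ, x τ ^ 2 ≤ C + D * τ) : Tendsto (fun τ : ℕ => x τ / τ) atTop (𝓝 0) := by
  have hbound : Tendsto (fun τ : ℕ => √(C / (τ : ℝ) ^ 2 + D / τ)) atTop (𝓝 0) := by
    have hτ := tendsto_natCast_atTop_atTop (R := ℝ)
    have := ((tendsto_const_nhds (x := C)).div_atTop ((tendsto_pow_atTop two_ne_zero).comp hτ)).add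
      ((tendsto_const_nhds (x := D)).div_atTop hτ) |>.sqrt
    simpa [Function.comp_def] using this
  refine squeeze_zero_norm' ?_ hbound
  filter_upwards [eventually_gt_atTop 0] with τ hτ
  have : (0 : ℝ) < τ := Nat.cast_pos.mpr hτ
  refine Real.abs_le_sqrt ?_
  calc (x τ / τ) ^ 2 = x τ ^ 2 / (τ : ℝ) ^ 2 := div_pow _ _ _
    _ ≤ (C + D * τ) / (τ : ℝ) ^ 2 := by gcongr; exact h τ
    _ = C / (τ : ℝ) ^ 2 + D / τ := by field_simp

theorem lyapunov_drift_mean_rate_stable_general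
    {Ω : Type*} {m0 : MeasurableSpace Ω} {μ : Measure Ω} [IsProbabilityMeasure μ]
    (ℱ : Filtration ℕ m0) (N : ℕ) (Q : Fin N → ℕ → Ω → ℝ)
    (hnonneg : ∀ n t ω, 0 ≤ Q n t ω)
    (hL2 : ∀ n t, MemLp (Q n t) 2 μ)
    (L : ℕ → Ω → ℝ)
    (hL : ∀ t ω, L t ω = (1 / 2) * ∑ n, (Q n t ω) ^ 2)
    (B ε : ℝ) (hε : 0 ≤ ε)
    (hdrift : ∀ t : ℕ,
      ∀ᵐ ω ∂μ, (μ[fun ω' => L (t + 1) ω' - L t ω' | ℱ t]) ω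
        ≤ B - ε * ∑ n, Q n t ω) :
    ∀ n, Tendsto (fun τ : ℕ => (∫ ω, Q n τ ω ∂μ) / τ) atTop (nhds 0) := by
  have hLint (t : ℕ) : Integrable (L t) μ :=
    ((integrable_finsetSum _ fun n _ => (hL2 n t).integrable_sq).const_mul (1 / 2)).congr
      (.of_forall fun ω => (hL t ω).symm)
  have hcond (t : ℕ) : μ[L (t + 1) - L t | ℱ t] ≤ᵐ[μ] fun _ => B := by
    filter_upwards [hdrift t] with ω hω
    have : 0 ≤ ε * ∑ n, Q n t ω := mul_nonneg hε (Finset.sum_nonneg fun n _ => hnonneg n t ω)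
    exact hω.trans (by linarith)
  intro n
  refine tendsto_div_natCast_of_sq_le_add_mul (C := 2 * ∫ ω, L 0 ω ∂μ) (D := 2 * B) fun τ => ?_
  have hQ_sq_le (ω : Ω) : Q n τ ω ^ 2 ≤ 2 * L τ ω := by
    rw [hL]
    linarith [Finset.single_le_sum (fun m _ => sq_nonneg (Q m τ ω)) (Finset.mem_univ n)]
  calc (∫ ω, Q n τ ω ∂μ) ^ 2 ≤ ∫ ω, Q n τ ω ^ 2 ∂μ := sq_integral_le_integral_sq (hL2 n τ)
    _ ≤ ∫ ω, 2 * L τ ω ∂μ :=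
      integral_mono (hL2 n τ).integrable_sq ((hLint τ).const_mul 2) hQ_sq_le
    _ ≤ 2 * ∫ ω, L 0 ω ∂μ + 2 * B * τ := by
      rw [integral_const_mul]
      linarith [integral_le_add_mul_of_condExp_sub_le ℱ hLint hcond τ]

/-- Lyapunov drift condition with ε ≥ 0 implies every queue is mean rate stable. -/
theorem lyapunov_drift_mean_rate_stable
    {Ω : Type*} {m0 : MeasurableSpace Ω} {μ : Measure Ω} [IsProbabilityMeasure μ]
    (ℱ : Filtration ℕ m0) (N : ℕ) (Q : Fin N → ℕ → Ω → ℝ)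
    (hadapt : ∀ n, StronglyAdapted ℱ (fun t => Q n t))
    (hnonneg : ∀ n t ω, 0 ≤ Q n t ω)
    (hL2 : ∀ n t, MemLp (Q n t) 2 μ)
    (L : ℕ → Ω → ℝ)
    (hL : ∀ t ω, L t ω = (1 / 2) * ∑ n, (Q n t ω) ^ 2)
    (B ε : ℝ) (hB : 0 ≤ B) (hε : 0 ≤ ε)
    (hdrift : ∀ t : ℕ,
      ∀ᵐ ω ∂μ, (μ[fun ω' => L (t + 1) ω' - L t ω' | ℱ t]) ω
        ≤ B - ε * ∑ n, Q n t ω) :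
    ∀ n, Tendsto (fun τ : ℕ => (∫ ω, Q n τ ω ∂μ) / τ) atTop (nhds 0) :=
  lyapunov_drift_mean_rate_stable_general ℱ N Q hnonneg hL2 L hL B ε hε hdrift
end

section
/- Let (Ω, F, P) be a probability space with a filtration (F_t)_{t∈ℕ}, and let Q_1(t), …, Q_N(t) be nonnegative real-valued stochastic processes adapted to (F_t) with E[Q_n(t)²] < ∞ for all n and t. Define the Lyapunov function L(t) = (1/2) Σ_{n=1}^N Q_n(t)² and the Lyapunov drift Δ(t) = E[L(t+1) − L(t) | F_t]. If there exist constants B ≥ 0 and ε > 0 such that Δ(t) ≤ B − ε Σ_{n=1}^N Q_n(t) almost surely for every t ∈ ℕ, then limsup_{τ→∞} (1/τ) Σ_{t=1}^{τ} Σ_{n=1}^N E[Q_n(t)] ≤ B/ε, i.e., all queues are strongly stable. -/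
/-!
Taking expectations in the drift condition gives `E[L(t+1)] - E[L(t)] ≤ B - ε Σₙ E[Qₙ(t)]`.
Summing over `t = 1, …, τ` telescopes, and since `L ≥ 0` this yields
`ε Σₜ Σₙ E[Qₙ(t)] ≤ τ B + E[L(1)]`; after dividing by `ε τ` the term `E[L(1)] / (ε τ)` vanishes.
-/

open MeasureTheory Filter Finset

theorem integral_le_of_condExp_le_ae {Ω : Type*} {m m0 : MeasurableSpace Ω} {μ : Measure Ω}
    (hm : m ≤ m0) [SigmaFinite (μ.trim hm)] {X Y : Ω → ℝ} (hY : Integrable Y μ)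
    (h : μ[X | m] ≤ᵐ[μ] Y) : ∫ ω, X ω ∂μ ≤ ∫ ω, Y ω ∂μ :=
  (integral_condExp (f := X) hm).symm.trans_le (integral_mono_ae integrable_condExp hY h)

theorem mul_sum_Icc_le_of_drift {f S : ℕ → ℝ} {B ε : ℝ} (hf : ∀ t, 0 ≤ f t)
    (hdrift : ∀ t, f (t + 1) - f t ≤ B - ε * S t) (τ : ℕ) :
    ε * ∑ t ∈ Icc 1 τ, S t ≤ τ * B + f 1 := by
  have telescope : ∀ τ : ℕ, ε * ∑ t ∈ Icc 1 τ, S t ≤ τ * B + f 1 - f (τ + 1) := by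
    intro τ
    induction τ with
    | zero => simp
    | succ τ ih =>
      rw [sum_Icc_succ_top (by omega), mul_add]
      push_cast
      linarith [hdrift (τ + 1)]
  linarith [telescope τ, hf (τ + 1)]

theorem limsup_le_of_le_add_div_natCast {a : ℕ → ℝ} {c d : ℝ} (ha : ∀ τ, 0 ≤ a τ)
    (h : ∀ τ ≥ 1, a τ ≤ c + d / τ) : limsup a atTop ≤ c := by
  have hlim : Tendsto (fun τ : ℕ => c + d / τ) atTop (nhds c) := by
    simpa using tendsto_const_nhds.add
      (tendsto_const_nhds.div_atTop (tendsto_natCast_atTop_atTop (R := ℝ)))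
  calc limsup a atTop ≤ limsup (fun τ : ℕ => c + d / τ) atTop :=
        limsup_le_limsup (eventually_atTop.2 ⟨1, h⟩)
          (isCoboundedUnder_le_of_le atTop ha) hlim.isBoundedUnder_le
    _ = c := hlim.limsup_eq

theorem limsup_cesaro_le_of_drift {f S : ℕ → ℝ} {B ε : ℝ} (hε : 0 < ε) (hf : ∀ t, 0 ≤ f t)
    (hS : ∀ t, 0 ≤ S t) (hdrift : ∀ t, f (t + 1) - f t ≤ B - ε * S t) :
    limsup (fun τ : ℕ => (1 / (τ : ℝ)) * ∑ t ∈ Icc 1 τ, S t) atTop ≤ B / ε := by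
  refine limsup_le_of_le_add_div_natCast (d := f 1 / ε)
    (fun τ => mul_nonneg (by positivity) (sum_nonneg fun t _ => hS t)) fun τ hτ => ?_
  have hτ : (0 : ℝ) < τ := by exact_mod_cast hτ
  have hsum : ∑ t ∈ Icc 1 τ, S t ≤ (τ * B + f 1) / ε :=
    (le_div_iff₀' hε).2 (mul_sum_Icc_le_of_drift hf hdrift τ)
  calc (1 / (τ : ℝ)) * ∑ t ∈ Icc 1 τ, S t ≤ (1 / (τ : ℝ)) * ((τ * B + f 1) / ε) := by
        gcongr
    _ = B / ε + f 1 / ε / τ := by field_simp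

theorem lyapunov_drift_strongly_stable_general
    {Ω : Type*} {m0 : MeasurableSpace Ω} {μ : Measure Ω} [IsProbabilityMeasure μ]
    (ℱ : Filtration ℕ m0) (N : ℕ) (Q : Fin N → ℕ → Ω → ℝ)
    (hnonneg : ∀ n t ω, 0 ≤ Q n t ω)
    (hL2 : ∀ n t, MemLp (Q n t) 2 μ)
    (L : ℕ → Ω → ℝ)
    (hL : ∀ t ω, L t ω = (1 / 2) * ∑ n, (Q n t ω) ^ 2)
    (B ε : ℝ) (hε : 0 < ε)
    (hdrift : ∀ t : ℕ,
      ∀ᵐ ω ∂μ, (μ[fun ω' => L (t + 1) ω' - L t ω' | ℱ t]) ω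
        ≤ B - ε * ∑ n, Q n t ω) :
    limsup (fun τ : ℕ => (1 / (τ : ℝ)) * ∑ t ∈ Finset.Icc 1 τ, ∑ n, ∫ ω, Q n t ω ∂μ)
      atTop ≤ B / ε := by
  have hQ : ∀ n t, Integrable (Q n t) μ := fun n t => (hL2 n t).integrable one_le_two
  have hLint : ∀ t, Integrable (L t) μ := fun t =>
    ((integrable_finsetSum _ fun n _ => (hL2 n t).integrable_sq).const_mul (1 / 2)).congr
      (.of_forall fun ω => (hL t ω).symm)
  refine limsup_cesaro_le_of_drift hε (f := fun t => ∫ ω, L t ω ∂μ)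
    (fun t => integral_nonneg fun ω => by rw [hL]; positivity)
    (fun t => sum_nonneg fun n _ => integral_nonneg (hnonneg n t)) fun t => ?_
  have hsum : Integrable (fun ω => ε * ∑ n, Q n t ω) μ :=
    (integrable_finsetSum _ fun n _ => hQ n t).const_mul ε
  calc ∫ ω, L (t + 1) ω ∂μ - ∫ ω, L t ω ∂μ = ∫ ω, (L (t + 1) ω - L t ω) ∂μ :=
        (integral_sub (hLint _) (hLint t)).symm
    _ ≤ ∫ ω, (B - ε * ∑ n, Q n t ω) ∂μ :=
        integral_le_of_condExp_le_ae (ℱ.le t) ((integrable_const B).sub hsum) (hdrift t)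
    _ = B - ε * ∑ n, ∫ ω, Q n t ω ∂μ := by
        rw [integral_sub (integrable_const B) hsum, integral_const, integral_const_mul,
          integral_finsetSum _ fun n _ => hQ n t]
        simp

/-- Lyapunov drift condition with ε > 0 implies all queues are strongly stable:
the time-averaged sum of expected queue lengths is asymptotically bounded by B/ε. -/
theorem lyapunov_drift_strongly_stable
    {Ω : Type*} {m0 : MeasurableSpace Ω} {μ : Measure Ω} [IsProbabilityMeasure μ]
    (ℱ : Filtration ℕ m0) (N : ℕ) (Q : Fin N → ℕ → Ω → ℝ)
    (hadapt : ∀ n, Adapted ℱ (fun t => Q n t))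
    (hnonneg : ∀ n t ω, 0 ≤ Q n t ω)
    (hL2 : ∀ n t, MemLp (Q n t) 2 μ)
    (L : ℕ → Ω → ℝ)
    (hL : ∀ t ω, L t ω = (1 / 2) * ∑ n, (Q n t ω) ^ 2)
    (B ε : ℝ) (hB : 0 ≤ B) (hε : 0 < ε)
    (hdrift : ∀ t : ℕ,
      ∀ᵐ ω ∂μ, (μ[fun ω' => L (t + 1) ω' - L t ω' | ℱ t]) ω
        ≤ B - ε * ∑ n, Q n t ω) :
    limsup (fun τ : ℕ => (1 / (τ : ℝ)) * ∑ t ∈ Finset.Icc 1 τ, ∑ n, ∫ ω, Q n t ω ∂μ)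
      atTop ≤ B / ε :=
  lyapunov_drift_strongly_stable_general ℱ N Q hnonneg hL2 L hL B ε hε hdrift
end

section
/- Let E be a finite set and let f be a set function on subsets of E that is nonnegative, monotone, and submodular. Fix k ≥ 1 with k ≤ |E|, and let G_0 = ∅, G_{i+1} = G_i ∪ {e_i} for 0 ≤ i < k, where at each step e_i is an element of E \ G_i maximizing the marginal gain f(G_i ∪ {e}) − f(G_i) over all e ∈ E \ G_i. Then f(G_k) ≥ (1 − (1 − 1/k)^k) · max{ f(S) : S ⊆ E, |S| ≤ k } ≥ (1 − e^{−1}) · max{ f(S) : S ⊆ E, |S| ≤ k }. In particular, the incrementally greedy selection achieves at least a (1 − e^{−1}) fraction of the optimal value. -/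
open Finset

def Submodular {α : Type*} [DecidableEq α] (E : Finset α) (f : Finset α → ℝ) : Prop :=
  ∀ S T : Finset α, S ⊆ T → T ⊆ E → ∀ e ∈ E, e ∉ T →
    f (insert e T) - f T ≤ f (insert e S) - f S

/-!
For an optimal `S` with `|S| ≤ k` and the current greedy set `G`, submodularity
bounds `f(S ∪ G) - f(G)` by the sum of the marginal gains of the elements of `S \ G`, each of
which is at most the greedy gain. Monotonicity then gives `f(S) - f(G) ≤ k · (greedy gain)`, so
every greedy step shrinks the gap `f(S) - f(G)` by a factor `1 - 1/k`. After `k` steps the gap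
is at most `(1 - 1/k)^k f(S) ≤ e⁻¹ f(S)`.
-/

namespace Submodular

variable {α : Type*} [DecidableEq α] {E : Finset α} {f : Finset α → ℝ}

theorem sub_le_sum_marginal (hf : Submodular E f) {T : Finset α} (hT : T ⊆ E)
    {A : Finset α} (hA : A ⊆ E) :
    f (T ∪ A) - f T ≤ ∑ x ∈ A \ T, (f (insert x T) - f T) := by
  induction A using Finset.induction_on with
  | empty => simp
  | insert a A haA ih =>
    have haE : a ∈ E := hA (mem_insert_self a A)
    have hAE : A ⊆ E := (subset_insert a A).trans hA
    by_cases haT : a ∈ T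
    · rw [union_insert, insert_eq_self.mpr (mem_union_left A haT), insert_sdiff_of_mem A haT]
      exact ih hAE
    · have haTA : a ∉ T ∪ A := by simp [haT, haA]
      have hmarginal := hf T (T ∪ A) subset_union_left (union_subset hT hAE) a haE haTA
      rw [union_insert, insert_sdiff_of_notMem A haT,
        sum_insert fun h => haA (mem_sdiff.mp h).1]
      linarith [ih hAE]

theorem sub_le_card_mul_of_marginal_le (hf : Submodular E f)
    (hmono : ∀ S T : Finset α, S ⊆ T → T ⊆ E → f S ≤ f T) {S T : Finset α}
    (hS : S ⊆ E) (hT : T ⊆ E) {g : ℝ} (hg₀ : 0 ≤ g)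
    (hg : ∀ x ∈ S \ T, f (insert x T) - f T ≤ g) :
    f S - f T ≤ #S * g :=
  calc f S - f T ≤ f (T ∪ S) - f T := by
        linarith [hmono S (T ∪ S) subset_union_right (union_subset hT hS)]
    _ ≤ ∑ x ∈ S \ T, (f (insert x T) - f T) := hf.sub_le_sum_marginal hT hS
    _ ≤ ∑ _x ∈ S \ T, g := sum_le_sum hg
    _ = #(S \ T) * g := by rw [sum_const, nsmul_eq_mul]
    _ ≤ #S * g := by gcongr; exact sdiff_subset

theorem sub_insert_greedy_le (hf : Submodular E f)
    (hmono : ∀ S T : Finset α, S ⊆ T → T ⊆ E → f S ≤ f T) {S T : Finset α} {x₀ : α}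
    {k : ℕ} (hk : 1 ≤ k) (hS : S ⊆ E) (hSk : #S ≤ k) (hT : T ⊆ E) (hx₀ : x₀ ∈ E)
    (hgreedy : ∀ x ∈ E \ T, f (insert x T) - f T ≤ f (insert x₀ T) - f T) :
    f S - f (insert x₀ T) ≤ (1 - 1 / k) * (f S - f T) := by
  set g := f (insert x₀ T) - f T
  have hg₀ : 0 ≤ g := by
    linarith [hmono T (insert x₀ T) (subset_insert _ _) (insert_subset hx₀ hT)]
  have hgap : f S - f T ≤ k * g :=
    (hf.sub_le_card_mul_of_marginal_le hmono hS hT hg₀ fun x hx =>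
      hgreedy x (sdiff_subset_sdiff hS subset_rfl hx)).trans (by gcongr)
  have hk' : (0 : ℝ) < k := by exact_mod_cast hk
  have hdiv : (f S - f T) / k ≤ g := by rw [div_le_iff₀ hk']; linarith
  calc f S - f (insert x₀ T) = f S - f T - g := by ring
    _ ≤ f S - f T - (f S - f T) / k := by linarith
    _ = (1 - 1 / k) * (f S - f T) := by ring

end Submodular

theorem greedy_chain_subset {α : Type*} [DecidableEq α] {E : Finset α} {G : ℕ → Finset α}
    {e : ℕ → α} {k : ℕ} (hG0 : G 0 = ∅) (hstep : ∀ i < k, G (i + 1) = insert (e i) (G i))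
    (hmem : ∀ i < k, e i ∈ E) : ∀ i ≤ k, G i ⊆ E
  | 0, _ => hG0 ▸ empty_subset E
  | i + 1, hi => hstep i hi ▸
      insert_subset (hmem i hi) (greedy_chain_subset hG0 hstep hmem i (by omega))

theorem greedy_submodular_guarantee_general
    {α : Type*} [DecidableEq α] (E : Finset α) (f : Finset α → ℝ)
    (hnonneg : ∀ S ⊆ E, 0 ≤ f S)
    (hmono : ∀ S T : Finset α, S ⊆ T → T ⊆ E → f S ≤ f T)
    (hsub : Submodular E f)
    (k : ℕ) (hk1 : 1 ≤ k)
    (G : ℕ → Finset α) (e : ℕ → α)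
    (hG0 : G 0 = ∅)
    (hstep : ∀ i < k, G (i + 1) = insert (e i) (G i))
    (hmem : ∀ i < k, e i ∈ E \ G i)
    (hgreedy : ∀ i < k, ∀ x ∈ E \ G i,
      f (insert x (G i)) - f (G i) ≤ f (insert (e i) (G i)) - f (G i)) :
    ∀ S ⊆ E, S.card ≤ k →
      (1 - (1 - 1 / (k : ℝ)) ^ k) * f S ≤ f (G k) ∧
      (1 - Real.exp (-1)) * f S ≤ f (G k) := by
  intro S hS hSk
  have heE i (hi : i < k) : e i ∈ E := (mem_sdiff.mp (hmem i hi)).1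
  have hGE := greedy_chain_subset hG0 hstep heE
  have hc₀ : (0 : ℝ) ≤ 1 - 1 / k := by
    rw [sub_nonneg, div_le_one (by exact_mod_cast hk1)]; exact_mod_cast hk1
  have hgap : f S - f (G k) ≤ (1 - 1 / (k : ℝ)) ^ k * (f S - f (G 0)) :=
    le_geom (u := fun i => f S - f (G i)) hc₀ k fun i hi => by
      simpa only [hstep i hi] using hsub.sub_insert_greedy_le hmono hk1 hS hSk
        (hGE i hi.le) (heE i hi) (hgreedy i hi)
  have hexp : (1 - 1 / (k : ℝ)) ^ k ≤ Real.exp (-1) :=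
    Real.one_sub_div_pow_le_exp_neg (by exact_mod_cast hk1)
  have hf₀ : 0 ≤ f (G 0) := hG0 ▸ hnonneg ∅ (empty_subset E)
  have hratio : (1 - (1 - 1 / (k : ℝ)) ^ k) * f S ≤ f (G k) := by
    linarith [mul_nonneg (pow_nonneg hc₀ k) hf₀]
  exact ⟨hratio, (mul_le_mul_of_nonneg_right (by linarith) (hnonneg S hS)).trans hratio⟩

/-- `(1 - e⁻¹)`-approximation guarantee of greedy maximization of a nonnegative
monotone submodular set function subject to a cardinality constraint `k`. -/
theorem greedy_submodular_guarantee
    {α : Type*} [DecidableEq α] (E : Finset α) (f : Finset α → ℝ)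
    (hnonneg : ∀ S ⊆ E, 0 ≤ f S)
    (hmono : ∀ S T : Finset α, S ⊆ T → T ⊆ E → f S ≤ f T)
    (hsub : Submodular E f)
    (k : ℕ) (hk1 : 1 ≤ k) (hkE : k ≤ E.card)
    (G : ℕ → Finset α) (e : ℕ → α)
    (hG0 : G 0 = ∅)
    (hstep : ∀ i < k, G (i + 1) = insert (e i) (G i))
    (hmem : ∀ i < k, e i ∈ E \ G i)
    (hgreedy : ∀ i < k, ∀ x ∈ E \ G i,
      f (insert x (G i)) - f (G i) ≤ f (insert (e i) (G i)) - f (G i)) :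
    ∀ S ⊆ E, S.card ≤ k →
      (1 - (1 - 1 / (k : ℝ)) ^ k) * f S ≤ f (G k) ∧
      (1 - Real.exp (-1)) * f S ≤ f (G k) :=
  greedy_submodular_guarantee_general E f hnonneg hmono hsub k hk1 G e hG0 hstep hmem hgreedy
end

section
/- Let E be a finite set and let f be a set function on subsets of E that is nonnegative, monotone, and submodular. Let k ≥ 1, let S* ⊆ E with |S*| ≤ k, let G ⊆ E with E \ G nonempty, and let e* ∈ E \ G be an element maximizing the marginal gain f(G ∪ {e}) − f(G) over all e ∈ E \ G. Then f(S*) − f(G ∪ {e*}) ≤ (1 − 1/k) · (f(S*) − f(G)). -/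
open Finset

/-- Per-step contraction of the greedy optimality gap: adding the element of maximal
marginal gain shrinks the gap to any set `S*` of cardinality at most `k` by a factor
`(1 - 1/k)`. -/
theorem greedy_gap_contraction
    {α : Type*} [DecidableEq α] (E : Finset α) (f : Finset α → ℝ)
    (hnonneg : ∀ S ⊆ E, 0 ≤ f S)
    (hmono : ∀ S T : Finset α, S ⊆ T → T ⊆ E → f S ≤ f T)
    (hsub : Submodular E f)
    (k : ℕ) (hk : 1 ≤ k)
    (Sstar : Finset α) (hSstar : Sstar ⊆ E) (hcard : Sstar.card ≤ k)
    (G : Finset α) (hG : G ⊆ E)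
    (estar : α) (hestar : estar ∈ E \ G)
    (hmax : ∀ x ∈ E \ G, f (insert x G) - f G ≤ f (insert estar G) - f G) :
    f Sstar - f (insert estar G) ≤ (1 - 1 / (k : ℝ)) * (f Sstar - f G) := by
  set δ : ℝ := f (insert estar G) - f G with hδ
  have hestarE : estar ∈ E := (mem_sdiff.mp hestar).1
  have hiG : insert estar G ⊆ E := insert_subset hestarE hG
  have hδ0 : 0 ≤ δ := by
    have := hmono G (insert estar G) (subset_insert _ _) hiG
    linarith
  -- telescoping lemma
  have key : ∀ A : Finset α, A ⊆ E → (∀ x ∈ A, x ∉ G) →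
      f (A ∪ G) - f G ≤ (A.card : ℝ) * δ := by
    intro A
    induction A using Finset.induction_on with
    | empty => intro _ _; simp
    | @insert a A ha ih =>
      intro hAE hAG
      have haE : a ∈ E := hAE (mem_insert_self a A)
      have haG : a ∉ G := hAG a (mem_insert_self a A)
      have hAE' : A ⊆ E := (subset_insert a A).trans hAE
      have hAG' : ∀ x ∈ A, x ∉ G := fun x hx => hAG x (mem_insert_of_mem hx)
      have hA := ih hAE' hAG'
      have hUE : A ∪ G ⊆ E := union_subset hAE' hG
      have haU : a ∉ A ∪ G := by simp [ha, haG]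
      have hsub' := hsub G (A ∪ G) subset_union_right hUE a haE haU
      have hmax' : f (insert a G) - f G ≤ δ := hmax a (mem_sdiff.mpr ⟨haE, haG⟩)
      have : f (insert a (A ∪ G)) - f (A ∪ G) ≤ δ := le_trans hsub' hmax'
      rw [insert_union]
      rw [card_insert_of_notMem ha]
      push_cast
      linarith
  have hkey := key (Sstar \ G) ((sdiff_subset).trans hSstar) (fun x hx => (mem_sdiff.mp hx).2)
  have hcard' : ((Sstar \ G).card : ℝ) ≤ (k : ℝ) := by
    exact_mod_cast le_trans (card_le_card sdiff_subset) hcard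
  have h1 : f Sstar ≤ f (Sstar \ G ∪ G) := by
    apply hmono _ _ _ (union_subset ((sdiff_subset).trans hSstar) hG)
    intro x hx
    by_cases hxG : x ∈ G
    · exact mem_union_right _ hxG
    · exact mem_union_left _ (mem_sdiff.mpr ⟨hx, hxG⟩)
  have h2 : f Sstar - f G ≤ (k : ℝ) * δ := by
    have : ((Sstar \ G).card : ℝ) * δ ≤ (k : ℝ) * δ :=
      mul_le_mul_of_nonneg_right hcard' hδ0
    linarith
  have hkpos : (0 : ℝ) < k := by exact_mod_cast hk
  have hkne : (k : ℝ) ≠ 0 := ne_of_gt hkpos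
  have : (1 / (k : ℝ)) * (f Sstar - f G) ≤ δ := by
    rw [div_mul_eq_mul_div, one_mul, div_le_iff₀ hkpos]
    linarith [h2]
  have hexp : f Sstar - f (insert estar G) = (f Sstar - f G) - δ := by
    rw [hδ]; ring
  rw [hexp]
  have : (1 - 1 / (k : ℝ)) * (f Sstar - f G)
      = (f Sstar - f G) - (1 / (k : ℝ)) * (f Sstar - f G) := by ring
  linarith
end

section
/- Let N ≥ 1 and n ≥ 1 be integers, let R_1, …, R_n and S be N × N Hermitian positive semidefinite complex matrices, and let σ > 0 be a real number. Then there exists a unique vector (e_1, …, e_n) ∈ ℝ^n with e_i ≥ 0 for all i satisfying the coupled fixed-point equations e_i = (1/N) · tr( R_i · ( (1/N) Σ_{j=1}^n R_j / (1 + e_j) + S + σ·I_N )^{−1} ) for all i ∈ {1, …, n}; here the matrix being inverted is Hermitian positive definite, so the inverse exists and each trace is a nonnegative real number. -/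
open Matrix Set Function
open scoped ComplexOrder MatrixOrder

/-!
For `e ≥ 0` the matrix `fpMatrix R S σ e` dominates `σ • 1`, so it is positive definite and the
right-hand side `T e` of the equations is nonnegative and bounded by `σ⁻¹ tr R_i / N`.
If `1 + e ≤ α (1 + e')` with `α ≥ 1`, then `fpMatrix e' ≤ α • fpMatrix e` in the Loewner order,
and operator antitonicity of the inverse together with monotonicity of `X ↦ tr (R_i X)` gives
`T e ≤ α T e'`. With `α = 1` this makes `T` monotone, so Knaster–Tarski on a box yields a fixed
point. For two fixed points `e, e'`, let `α` be the largest ratio `(1 + e_k) / (1 + e'_k)`: if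
`α > 1`, then `1 + e_k = α (1 + e'_k) > 1 + α e'_k ≥ 1 + T e_k = 1 + e_k`. Hence `e ≤ e'`, and
by symmetry `e = e'`.
-/

/-- The matrix appearing in the deterministic-equivalent fixed-point equations:
`(1/N) ∑_j R_j/(1 + e_j) + S + σ I`. -/
noncomputable def fpMatrix {N n : ℕ} (R : Fin n → Matrix (Fin N) (Fin N) ℂ)
    (S : Matrix (Fin N) (Fin N) ℂ) (σ : ℝ) (e : Fin n → ℝ) :
    Matrix (Fin N) (Fin N) ℂ :=
  ((N : ℝ)⁻¹ • ∑ j, (1 + e j)⁻¹ • R j) + S + σ • 1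

theorem exists_isFixedPt_of_mapsTo_Icc {α : Type*} [ConditionallyCompleteLattice α]
    {f : α → α} {a b : α} (hab : a ≤ b) (hf : MonotoneOn f (Icc a b))
    (hfab : MapsTo f (Icc a b) (Icc a b)) : ∃ x ∈ Icc a b, IsFixedPt f x := by
  have : Fact (a ≤ b) := ⟨hab⟩
  let F : Icc a b →o Icc a b := ⟨hfab.restrict, fun x y hxy => hf x.2 y.2 hxy⟩
  exact ⟨F.lfp, F.lfp.2, congrArg Subtype.val F.map_lfp⟩

/-- Yates' scalability of standard interference functions, in the variables `1 + e`. -/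
def IsOneAddScalable {ι : Type*} (T : (ι → ℝ) → ι → ℝ) : Prop :=
  ∀ ⦃e e' : ι → ℝ⦄, 0 ≤ e → 0 ≤ e' → ∀ ⦃α : ℝ⦄, 1 ≤ α →
    (∀ j, 1 + e j ≤ α * (1 + e' j)) → T e ≤ α • T e'

namespace IsOneAddScalable

variable {ι : Type*} {T : (ι → ℝ) → ι → ℝ}

theorem monotoneOn (hT : IsOneAddScalable T) : MonotoneOn T (Ici 0) := fun e he e' he' hee' => by
  simpa using hT he he' le_rfl fun j => by simpa using hee' j

theorem le_of_isFixedPt [Finite ι] (hT : IsOneAddScalable T) {e e' : ι → ℝ} (he : 0 ≤ e)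
    (he' : 0 ≤ e') (hfe : IsFixedPt T e) (hfe' : IsFixedPt T e') : e ≤ e' := by
  intro i
  by_contra! hi
  have : Nonempty ι := ⟨i⟩
  have hpos' : ∀ j, 0 < 1 + e' j := fun j => add_pos_of_pos_of_nonneg one_pos (he' j)
  obtain ⟨k, hk⟩ := Finite.exists_max fun j => (1 + e j) / (1 + e' j)
  set α := (1 + e k) / (1 + e' k)
  have hα : 1 < α := by
    refine lt_of_lt_of_le ?_ (hk i)
    rw [one_lt_div (hpos' i)]
    linarith
  have hαk : α * (1 + e' k) = 1 + e k := div_mul_cancel₀ _ (hpos' k).ne'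
  have hek : e k ≤ α * e' k := by
    simpa [hfe.eq, hfe'.eq] using hT he he' hα.le (fun j => (div_le_iff₀ (hpos' j)).mp (hk j)) k
  linarith

end IsOneAddScalable

namespace Matrix

variable {n 𝕜 : Type*} [Fintype n] [RCLike 𝕜]

theorem PosSemidef.trace_mul_nonneg {A B : Matrix n n 𝕜} (hA : A.PosSemidef)
    (hB : B.PosSemidef) : 0 ≤ (A * B).trace := by
  classical
  obtain ⟨C, rfl⟩ := CStarAlgebra.nonneg_iff_eq_star_mul_self.mp hA.nonneg
  rw [Matrix.mul_assoc, trace_mul_comm, Matrix.mul_assoc, ← Matrix.mul_assoc, star_eq_conjTranspose]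
  exact (hB.mul_mul_conjTranspose_same C).trace_nonneg

theorem PosSemidef.trace_mul_le_trace_mul {A B C : Matrix n n 𝕜} (hA : A.PosSemidef)
    (hBC : B ≤ C) : (A * B).trace ≤ (A * C).trace := by
  rw [← sub_nonneg, ← trace_sub, ← Matrix.mul_sub]
  exact hA.trace_mul_nonneg hBC

variable [DecidableEq n]

theorem inv_real_smul {A : Matrix n n 𝕜} (hA : IsUnit A) {c : ℝ} (hc : c ≠ 0) :
    (c • A)⁻¹ = c⁻¹ • A⁻¹ :=
  inv_eq_left_inv <| by
    rw [smul_mul_smul_comm, inv_mul_cancel₀ hc, nonsing_inv_mul _ ((isUnit_iff_isUnit_det A).mp hA),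
      one_smul]

theorem PosDef.inv_anti {A B : Matrix n n ℂ} (hA : A.PosDef) (hAB : A ≤ B) : B⁻¹ ≤ A⁻¹ := by
  have hB : B.PosDef := by simpa using hA.add_posSemidef hAB
  open scoped Matrix.Norms.L2Operator in
  simpa using CStarAlgebra.inv_le_inv (a := hA.isUnit.unit) (b := hB.isUnit.unit)
    hA.posSemidef.nonneg hAB

theorem PosSemidef.re_trace_mul_inv_le_of_le_smul {A B C : Matrix n n ℂ} (hA : A.PosSemidef)
    (hB : B.PosDef) {c : ℝ} (hc : 0 < c) (hBC : B ≤ c • C) :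
    (A * C⁻¹).trace.re ≤ c * (A * B⁻¹).trace.re := by
  have hC : C.PosDef := by
    simpa [smul_smul, hc.ne'] using (hB.add_posSemidef hBC).smul (inv_pos.mpr hc)
  have hinv := hB.inv_anti hBC
  rw [inv_real_smul hC.isUnit hc.ne'] at hinv
  have htr := (Complex.le_def.mp (hA.trace_mul_le_trace_mul hinv)).1
  rw [mul_smul_comm, trace_smul, Complex.smul_re, smul_eq_mul] at htr
  rwa [inv_mul_le_iff₀ hc] at htr

end Matrix

section fpMatrix

variable {N n : ℕ} {R : Fin n → Matrix (Fin N) (Fin N) ℂ} {S : Matrix (Fin N) (Fin N) ℂ} {σ : ℝ}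

theorem smul_one_le_fpMatrix (hR : ∀ j, (R j).PosSemidef) (hS : S.PosSemidef) {e : Fin n → ℝ}
    (he : 0 ≤ e) : σ • (1 : Matrix (Fin N) (Fin N) ℂ) ≤ fpMatrix R S σ e := by
  rw [Matrix.le_iff, fpMatrix, add_sub_cancel_right]
  refine .add (.smul (posSemidef_sum _ fun j _ => (hR j).smul ?_) (by positivity)) hS
  exact inv_nonneg.mpr (add_nonneg zero_le_one (he j))

theorem fpMatrix_posDef (hR : ∀ j, (R j).PosSemidef) (hS : S.PosSemidef) (hσ : 0 < σ)
    {e : Fin n → ℝ} (he : 0 ≤ e) : (fpMatrix R S σ e).PosDef := by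
  simpa using (PosDef.one.smul hσ).add_posSemidef (smul_one_le_fpMatrix (σ := σ) hR hS he)

theorem fpMatrix_le_smul_fpMatrix (hR : ∀ j, (R j).PosSemidef) (hS : S.PosSemidef) (hσ : 0 ≤ σ)
    {e e' : Fin n → ℝ} (he : 0 ≤ e) (he' : 0 ≤ e') {α : ℝ} (hα : 1 ≤ α)
    (hee' : ∀ j, 1 + e j ≤ α * (1 + e' j)) : fpMatrix R S σ e' ≤ α • fpMatrix R S σ e := by
  have hsmul : α • fpMatrix R S σ e
      = (N : ℝ)⁻¹ • ∑ j, (α * (1 + e j)⁻¹) • R j + α • S + (α * σ) • 1 := by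
    simp only [fpMatrix, smul_add, Finset.smul_sum, smul_smul, mul_left_comm α]
  rw [hsmul, fpMatrix]
  gcongr ?_ + ?_ + ?_
  · gcongr with j
    · exact (hR j).nonneg
    · rw [le_mul_inv_iff₀ (add_pos_of_pos_of_nonneg one_pos (he j)),
        inv_mul_le_iff₀ (add_pos_of_pos_of_nonneg one_pos (he' j)), mul_comm]
      exact hee' j
  · exact le_smul_of_one_le_left hS.nonneg hα
  · exact smul_le_smul_of_nonneg_right (le_mul_of_one_le_left hσ hα) PosSemidef.one.nonneg

variable (R S σ) in
noncomputable def fpMap (e : Fin n → ℝ) (i : Fin n) : ℝ :=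
  (N : ℝ)⁻¹ * ((R i * (fpMatrix R S σ e)⁻¹).trace).re

theorem fpMap_nonneg (hR : ∀ j, (R j).PosSemidef) (hS : S.PosSemidef) (hσ : 0 < σ)
    {e : Fin n → ℝ} (he : 0 ≤ e) : 0 ≤ fpMap R S σ e := fun i =>
  mul_nonneg (by positivity)
    (Complex.nonneg_iff.mp ((hR i).trace_mul_nonneg (fpMatrix_posDef hR hS hσ he).inv.posSemidef)).1

theorem fpMap_le (hR : ∀ j, (R j).PosSemidef) (hS : S.PosSemidef) (hσ : 0 < σ)
    {e : Fin n → ℝ} (he : 0 ≤ e) : fpMap R S σ e ≤ fun i => (N : ℝ)⁻¹ * (σ⁻¹ * (R i).trace.re) := by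
  intro i
  have hle : (1 : Matrix (Fin N) (Fin N) ℂ) ≤ σ⁻¹ • fpMatrix R S σ e := by
    simpa [smul_smul, hσ.ne'] using
      smul_le_smul_of_nonneg_left (smul_one_le_fpMatrix (σ := σ) hR hS he) (inv_nonneg.mpr hσ.le)
  have := (hR i).re_trace_mul_inv_le_of_le_smul PosDef.one (inv_pos.mpr hσ) hle
  rw [inv_one, Matrix.mul_one] at this
  exact mul_le_mul_of_nonneg_left this (by positivity)

theorem isOneAddScalable_fpMap (hR : ∀ j, (R j).PosSemidef) (hS : S.PosSemidef) (hσ : 0 < σ) :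
    IsOneAddScalable (fpMap R S σ) := by
  intro e e' he he' α hα hee' i
  have hle := fpMatrix_le_smul_fpMatrix hR hS hσ.le he he' hα hee'
  have := (hR i).re_trace_mul_inv_le_of_le_smul (fpMatrix_posDef hR hS hσ he')
    (by linarith) hle
  simp only [fpMap, Pi.smul_apply, smul_eq_mul]
  rw [mul_left_comm]
  exact mul_le_mul_of_nonneg_left this (by positivity)

end fpMatrix

theorem fixed_point_equations_unique_solution_general
    (N n : ℕ)
    (R : Fin n → Matrix (Fin N) (Fin N) ℂ) (hR : ∀ i, (R i).PosSemidef)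
    (S : Matrix (Fin N) (Fin N) ℂ) (hS : S.PosSemidef)
    (σ : ℝ) (hσ : 0 < σ) :
    (∀ e : Fin n → ℝ, (∀ i, 0 ≤ e i) →
      (fpMatrix R S σ e).PosDef ∧
      ∀ i, 0 ≤ ((R i * (fpMatrix R S σ e)⁻¹).trace).re ∧
        ((R i * (fpMatrix R S σ e)⁻¹).trace).im = 0) ∧
    (∃! e : Fin n → ℝ, (∀ i, 0 ≤ e i) ∧
      ∀ i, e i = (N : ℝ)⁻¹ * ((R i * (fpMatrix R S σ e)⁻¹).trace).re) := by
  refine ⟨fun e he => ⟨fpMatrix_posDef hR hS hσ he, fun i => ?_⟩, ?_⟩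
  · obtain ⟨hre, him⟩ := Complex.nonneg_iff.mp
      ((hR i).trace_mul_nonneg (fpMatrix_posDef hR hS hσ he).inv.posSemidef)
    exact ⟨hre, him.symm⟩
  have hT := isOneAddScalable_fpMap hR hS hσ
  obtain ⟨e, ⟨he, -⟩, hfix⟩ := exists_isFixedPt_of_mapsTo_Icc
    ((fpMap_nonneg hR hS hσ le_rfl).trans (fpMap_le hR hS hσ le_rfl))
    (hT.monotoneOn.mono Icc_subset_Ici_self)
    (fun e he => ⟨fpMap_nonneg hR hS hσ he.1, fpMap_le hR hS hσ he.1⟩)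
  refine ⟨e, ⟨he, fun i => (congrFun hfix i).symm⟩, fun e' ⟨he', hfix'⟩ => ?_⟩
  have hfix' : IsFixedPt (fpMap R S σ) e' := funext fun i => (hfix' i).symm
  exact le_antisymm (hT.le_of_isFixedPt he' he hfix' hfix) (hT.le_of_isFixedPt he he' hfix hfix')

/-- Existence and uniqueness of the nonnegative solution of the coupled fixed-point
equations `e_i = (1/N) tr(R_i ((1/N) ∑_j R_j/(1+e_j) + S + σ I)⁻¹)`; moreover, for any
nonnegative `e` the matrix being inverted is Hermitian positive definite and each trace
is a nonnegative real number. -/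
theorem fixed_point_equations_unique_solution
    (N n : ℕ) (hN : 1 ≤ N) (hn : 1 ≤ n)
    (R : Fin n → Matrix (Fin N) (Fin N) ℂ) (hR : ∀ i, (R i).PosSemidef)
    (S : Matrix (Fin N) (Fin N) ℂ) (hS : S.PosSemidef)
    (σ : ℝ) (hσ : 0 < σ) :
    (∀ e : Fin n → ℝ, (∀ i, 0 ≤ e i) →
      (fpMatrix R S σ e).PosDef ∧
      ∀ i, 0 ≤ ((R i * (fpMatrix R S σ e)⁻¹).trace).re ∧
        ((R i * (fpMatrix R S σ e)⁻¹).trace).im = 0) ∧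
    (∃! e : Fin n → ℝ, (∀ i, 0 ≤ e i) ∧
      ∀ i, e i = (N : ℝ)⁻¹ * ((R i * (fpMatrix R S σ e)⁻¹).trace).re) :=
  fixed_point_equations_unique_solution_general N n R hR S hS σ hσ
end
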